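/- Let c ∈ {−1, 1}, let I, J ⊆ ℝ be open intervals, D = I × J, and f : I → ℝ, g : J → ℝ smooth with 1 − c f(u) g(v) nowhere zero on D. Fix τ ∈ ℝ, τ ≠ 0, with τ² + c f(u)² ≠ 0 and τ² + c g(v)² ≠ 0 on D, and define the complex-valued functions H = (iτ f + (iτ)^{−1} g)/(1 − c f g), λ = iτ(1 − c f²)/(−τ² − c f²), ν = iτ(1 − c g²)/(−τ² − c g²). Let ω, Q, R : D → ℝ be smooth, and let Ψ : D → SL₂(ℂ) be a smooth solution of ∂_u Ψ = Ψ U, ∂_v Ψ = Ψ V, where U = [[−ω_u/4, −Q e^{−ω/2}],[(1/2)(H + c) λ e^{ω/2}, ω_u/4]] and V = [[ω_v/4, −(1/2)(H − c) ν e^{ω/2}],[R e^{−ω/2}, −ω_v/4]]. Define F = Ψ i′ Ψ* with i′ = [[0,−i],[i,0]] and Ψ* the conjugate transpose. Then F takes values in the Hermitian 2×2 matrices, det F = −1, and with the scalar product ⟨X,Y⟩ = −(1/2)tr(i′ X i′ Yᵀ) on Hermitian matrices: ⟨∂_u F, ∂_u F⟩ = ⟨∂_v F, ∂_v F⟩ =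 0 and 2⟨∂_u F, ∂_v F⟩ = τ²(1 − c f²)(1 − c g²) e^ω/((τ² + c f²)(τ² + c g²)). -/

import Mathlib

open Matrix

noncomputable section

/-- Partial derivative in the first variable. -/
def pd1 (f : ℝ → ℝ → ℝ) (u v : ℝ) : ℝ := deriv (fun x => f x v) u

/-- Partial derivative in the second variable. -/
def pd2 (f : ℝ → ℝ → ℝ) (u v : ℝ) : ℝ := deriv (fun y => f u y) v

/-- Smoothness of a two-variable function on a set. -/
def Smooth2 (f : ℝ → ℝ → ℝ) (s : Set (ℝ × ℝ)) : Prop :=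
  ContDiffOn ℝ (⊤ : ℕ∞) (fun p : ℝ × ℝ => f p.1 p.2) s

/-- Entrywise derivative of a complex-matrix-valued function of a real variable. -/
def mderiv (f : ℝ → Matrix (Fin 2) (Fin 2) ℂ) (x : ℝ) : Matrix (Fin 2) (Fin 2) ℂ :=
  Matrix.of fun i j => deriv (fun t => f t i j) x

/-- The matrix `U` of the complexified Lax pair with two variable spectral parameters. -/
def UmatC6 (c : ℝ) (ω Q : ℝ → ℝ → ℝ) (H : ℝ → ℝ → ℂ) (lam : ℝ → ℂ) (u v : ℝ) :
    Matrix (Fin 2) (Fin 2) ℂ :=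
  !![(↑(-(pd1 ω u v) / 4) : ℂ), (↑(-(Q u v) * Real.exp (-(ω u v) / 2)) : ℂ);
     (1 / 2 : ℂ) * (H u v + (c : ℂ)) * lam u * (↑(Real.exp (ω u v / 2)) : ℂ),
       (↑((pd1 ω u v) / 4) : ℂ)]

/-- The matrix `V` of the complexified Lax pair with two variable spectral parameters. -/
def VmatC6 (c : ℝ) (ω R : ℝ → ℝ → ℝ) (H : ℝ → ℝ → ℂ) (nu : ℝ → ℂ) (u v : ℝ) :
    Matrix (Fin 2) (Fin 2) ℂ :=
  !![(↑((pd2 ω u v) / 4) : ℂ),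
       -((1 / 2 : ℂ) * (H u v - (c : ℂ)) * nu v * (↑(Real.exp (ω u v / 2)) : ℂ));
     (↑(R u v * Real.exp (-(ω u v) / 2)) : ℂ), (↑(-(pd2 ω u v) / 4) : ℂ)]

/-- The matrix `i′`. -/
def imat : Matrix (Fin 2) (Fin 2) ℂ := !![0, -Complex.I; Complex.I, 0]

/-- The scalar product `⟨X,Y⟩ = −(1/2)tr(i′Xi′Yᵀ)` on Hermitian matrices
(the metric of `E⁴₁ = ℍ`). -/
def formH (X Y : Matrix (Fin 2) (Fin 2) ℂ) : ℂ :=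
  -(1 / 2 : ℂ) * (imat * X * imat * Yᵀ).trace

/-!
Along the Lax pair, `F_u = Ψ (U i′ + i′ U*) Ψ*` and `F_v = Ψ (V i′ + i′ V*) Ψ*`. Since
`i′ X i′ = (adj X)ᵀ`, the form is `⟨X, Y⟩ = -½ tr (Y adj X)`; hence `⟨X, X⟩ = -det X`, and
conjugating both arguments by `Ψ` multiplies the form by `|det Ψ|² = 1`. As `U₁₂` is real and
`U₁₁ + conj U₂₂ = 0`, the matrix `U i′ + i′ U*` is `diag(0, i (conj U₂₁ - U₂₁))`; likewise
`V i′ + i′ V* = diag(i (V₁₂ - conj V₁₂), 0)`. Both are singular, so `F_u` and `F_v` are null,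
and their pairing is a product of imaginary parts. For real `τ` the functions `H`, `λ`, `ν` are
purely imaginary, so only the `±c` terms of `U₂₁` and `V₁₂` contribute, and `c² = 1`.
-/

theorem hasDerivAt_mul_mul_conjTranspose_apply {n : Type*} [Fintype n]
    {f : ℝ → Matrix n n ℂ} {f' : Matrix n n ℂ} {x : ℝ}
    (hf : ∀ i j, HasDerivAt (fun t => f t i j) (f' i j) x) (C : Matrix n n ℂ) (i j : n) :
    HasDerivAt (fun t => (f t * C * (f t)ᴴ) i j)
      ((f' * C * (f x)ᴴ + f x * C * f'ᴴ) i j) x := by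
  simp only [mul_apply, conjTranspose_apply, Matrix.add_apply, ← Finset.sum_add_distrib]
  exact HasDerivAt.fun_sum fun l _ =>
    (HasDerivAt.fun_sum fun k _ => (hf i k).mul_const (C k l)).fun_mul (hf j l).star

theorem mderiv_mul_mul_conjTranspose {f : ℝ → Matrix (Fin 2) (Fin 2) ℂ} {x : ℝ}
    (hf : ∀ i j, DifferentiableAt ℝ (fun t => f t i j) x) (C : Matrix (Fin 2) (Fin 2) ℂ) :
    mderiv (fun t => f t * C * (f t)ᴴ) x =
      mderiv f x * C * (f x)ᴴ + f x * C * (mderiv f x)ᴴ := by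
  ext i j
  exact (hasDerivAt_mul_mul_conjTranspose_apply (fun i j => (hf i j).hasDerivAt) C i j).deriv

theorem mderiv_mul_mul_conjTranspose_of_mderiv_eq {f : ℝ → Matrix (Fin 2) (Fin 2) ℂ} {x : ℝ}
    (hf : ∀ i j, DifferentiableAt ℝ (fun t => f t i j) x) {A : Matrix (Fin 2) (Fin 2) ℂ}
    (hA : mderiv f x = f x * A) (C : Matrix (Fin 2) (Fin 2) ℂ) :
    mderiv (fun t => f t * C * (f t)ᴴ) x = f x * (A * C + C * Aᴴ) * (f x)ᴴ := by
  rw [mderiv_mul_mul_conjTranspose hf, hA, conjTranspose_mul]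
  noncomm_ring

theorem differentiableAt_fst_slice {φ : ℝ × ℝ → ℂ} {s : Set (ℝ × ℝ)}
    (hφ : DifferentiableOn ℝ φ s) (hs : IsOpen s) {u v : ℝ} (huv : (u, v) ∈ s) :
    DifferentiableAt ℝ (fun x => φ (x, v)) u :=
  (hφ.differentiableAt (hs.mem_nhds huv)).comp u
    (differentiableAt_id.prodMk (differentiableAt_const v))

theorem differentiableAt_snd_slice {φ : ℝ × ℝ → ℂ} {s : Set (ℝ × ℝ)}
    (hφ : DifferentiableOn ℝ φ s) (hs : IsOpen s) {u v : ℝ} (huv : (u, v) ∈ s) :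
    DifferentiableAt ℝ (fun y => φ (u, y)) v :=
  (hφ.differentiableAt (hs.mem_nhds huv)).comp v
    ((differentiableAt_const u).prodMk differentiableAt_id)

section

open Complex

theorem imat_isHermitian : imat.IsHermitian := by
  ext i j
  fin_cases i <;> fin_cases j <;> simp [imat]

theorem det_imat : imat.det = -1 := by
  simp [imat, det_fin_two_of]

theorem imat_mul_mul_imat (X : Matrix (Fin 2) (Fin 2) ℂ) : imat * X * imat = X.adjugateᵀ := by
  ext i j
  fin_cases i <;> fin_cases j <;>
    simp only [imat, mul_apply, Fin.sum_univ_two, adjugate_fin_two, transpose_apply,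
      cons_val', cons_val_zero, cons_val_one, empty_val', cons_val_fin_one, of_apply,
      Fin.isValue, Fin.mk_zero, Fin.mk_one] <;>
    ring_nf <;> simp only [I_sq] <;> ring

theorem formH_eq_trace_mul_adjugate (X Y : Matrix (Fin 2) (Fin 2) ℂ) :
    formH X Y = -(1 / 2 : ℂ) * (Y * X.adjugate).trace := by
  rw [formH, imat_mul_mul_imat, ← transpose_mul, trace_transpose]

theorem formH_self (X : Matrix (Fin 2) (Fin 2) ℂ) : formH X X = -X.det := by
  rw [formH_eq_trace_mul_adjugate, mul_adjugate, trace_smul, trace_one]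
  simp only [Fintype.card_fin, Nat.cast_ofNat, smul_eq_mul]
  ring

theorem formH_congr (P A B : Matrix (Fin 2) (Fin 2) ℂ) :
    formH (P * A * Pᴴ) (P * B * Pᴴ) = P.det * star P.det * formH A B := by
  simp only [formH_eq_trace_mul_adjugate, adjugate_mul_distrib]
  have hPH : Pᴴ * Pᴴ.adjugate = star P.det • 1 := by rw [mul_adjugate, det_conjTranspose]
  calc -(1 / 2 : ℂ) * (P * B * Pᴴ * (Pᴴ.adjugate * (A.adjugate * P.adjugate))).trace
      = -(1 / 2 : ℂ) * (star P.det • (P * B * A.adjugate * P.adjugate)).trace := by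
        rw [show P * B * Pᴴ * (Pᴴ.adjugate * (A.adjugate * P.adjugate))
            = P * B * (Pᴴ * Pᴴ.adjugate) * A.adjugate * P.adjugate by noncomm_ring, hPH]
        simp
    _ = P.det * star P.det * (-(1 / 2 : ℂ) * (B * A.adjugate).trace) := by
        rw [trace_smul, trace_mul_cycle, ← mul_assoc, adjugate_mul]
        simp only [smul_mul_assoc, one_mul, trace_smul, smul_eq_mul]
        ring

theorem two_mul_formH_diag (a b : ℂ) :
    2 * formH !![0, 0; 0, I * b] !![I * a, 0; 0, 0] = a * b := by
  rw [formH_eq_trace_mul_adjugate, adjugate_fin_two_of, mul_fin_two, trace_fin_two_of]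
  linear_combination -(a * b) * I_sq

theorem mul_imat_add_imat_mul_conjTranspose (A : Matrix (Fin 2) (Fin 2) ℂ) :
    A * imat + imat * Aᴴ =
      !![I * (A 0 1 - star (A 0 1)), -I * (A 0 0 + star (A 1 1));
        I * (A 1 1 + star (A 0 0)), I * (star (A 1 0) - A 1 0)] := by
  ext i j
  fin_cases i <;> fin_cases j <;>
    simp only [imat, Matrix.add_apply, mul_apply, Fin.sum_univ_two, conjTranspose_apply,
      cons_val', cons_val_zero, cons_val_one, empty_val', cons_val_fin_one, of_apply,
      Fin.isValue, Fin.mk_zero, Fin.mk_one] <;>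
    ring

theorem UmatC6_mul_imat_add_imat_mul_conjTranspose (c : ℝ) (ω Q : ℝ → ℝ → ℝ)
    (H : ℝ → ℝ → ℂ) (lam : ℝ → ℂ) (u v : ℝ) :
    UmatC6 c ω Q H lam u v * imat + imat * (UmatC6 c ω Q H lam u v)ᴴ =
      !![0, 0; 0, I * (star (UmatC6 c ω Q H lam u v 1 0) - UmatC6 c ω Q H lam u v 1 0)] := by
  rw [mul_imat_add_imat_mul_conjTranspose]
  simp [UmatC6, -ofReal_exp, neg_div]

theorem VmatC6_mul_imat_add_imat_mul_conjTranspose (c : ℝ) (ω R : ℝ → ℝ → ℝ)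
    (H : ℝ → ℝ → ℂ) (nu : ℝ → ℂ) (u v : ℝ) :
    VmatC6 c ω R H nu u v * imat + imat * (VmatC6 c ω R H nu u v)ᴴ =
      !![I * (VmatC6 c ω R H nu u v 0 1 - star (VmatC6 c ω R H nu u v 0 1)), 0; 0, 0] := by
  rw [mul_imat_add_imat_mul_conjTranspose]
  simp [VmatC6, -ofReal_exp, neg_div]

theorem sub_star_mul_star_sub_of_imaginary (c h l n E : ℝ) :
    let β : ℂ := -((1 / 2 : ℂ) * (I * h - c) * (I * n) * E)
    let γ : ℂ := (1 / 2 : ℂ) * (I * h + c) * (I * l) * E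
    (β - star β) * (star γ - γ) = ((c * n * E * (c * l * E) : ℝ) : ℂ) := by
  simp only [one_div, star_neg, star_mul', star_inv₀, star_ofNat, star_sub, star_add,
    RCLike.star_def, conj_I, conj_ofReal, ofReal_mul]
  linear_combination -((c : ℂ) * n * E * (c * l * E)) * I_sq

theorem conformal_factor_eq {c : ℝ} (hc : c ^ 2 = 1) (τ a b W : ℝ) :
    c * (τ * (1 - c * b ^ 2) / (-τ ^ 2 - c * b ^ 2)) * Real.exp (W / 2) *
        (c * (τ * (1 - c * a ^ 2) / (-τ ^ 2 - c * a ^ 2)) * Real.exp (W / 2)) =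
      τ ^ 2 * (1 - c * a ^ 2) * (1 - c * b ^ 2) * Real.exp W /
        ((τ ^ 2 + c * a ^ 2) * (τ ^ 2 + c * b ^ 2)) := by
  have hexp : Real.exp (W / 2) * Real.exp (W / 2) = Real.exp W := by
    rw [← Real.exp_add, add_halves]
  rw [show -τ ^ 2 - c * a ^ 2 = -(τ ^ 2 + c * a ^ 2) by ring,
    show -τ ^ 2 - c * b ^ 2 = -(τ ^ 2 + c * b ^ 2) by ring, div_neg, div_neg, ← hexp,
    div_eq_mul_inv _ ((τ ^ 2 + c * a ^ 2) * _), mul_inv]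
  linear_combination (τ ^ 2 * (1 - c * a ^ 2) * (1 - c * b ^ 2) * Real.exp (W / 2) ^ 2 *
    (τ ^ 2 + c * a ^ 2)⁻¹ * (τ ^ 2 + c * b ^ 2)⁻¹) * hc

theorem two_mul_formH_laxPair {c : ℝ} (hc : c ^ 2 = 1) {τ : ℝ} (ω Q R : ℝ → ℝ → ℝ)
    {H : ℝ → ℝ → ℂ} {lam nu : ℝ → ℂ} {u v a b : ℝ}
    (hH : H u v = (I * τ * a + (I * τ)⁻¹ * b) / (1 - c * a * b))
    (hlam : lam u = I * τ * (1 - c * (a : ℂ) ^ 2) / (-(τ : ℂ) ^ 2 - c * (a : ℂ) ^ 2))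
    (hnu : nu v = I * τ * (1 - c * (b : ℂ) ^ 2) / (-(τ : ℂ) ^ 2 - c * (b : ℂ) ^ 2)) :
    2 * formH (UmatC6 c ω Q H lam u v * imat + imat * (UmatC6 c ω Q H lam u v)ᴴ)
        (VmatC6 c ω R H nu u v * imat + imat * (VmatC6 c ω R H nu u v)ᴴ) =
      ((τ ^ 2 * (1 - c * a ^ 2) * (1 - c * b ^ 2) * Real.exp (ω u v) /
        ((τ ^ 2 + c * a ^ 2) * (τ ^ 2 + c * b ^ 2)) : ℝ) : ℂ) := by
  have hH' : H u v = I * ((τ * a - b / τ) / (1 - c * a * b) : ℝ) := by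
    rw [hH, mul_inv, inv_I]; push_cast; ring
  have hlam' : lam u = I * (τ * (1 - c * a ^ 2) / (-τ ^ 2 - c * a ^ 2) : ℝ) := by
    rw [hlam]; push_cast; ring
  have hnu' : nu v = I * (τ * (1 - c * b ^ 2) / (-τ ^ 2 - c * b ^ 2) : ℝ) := by
    rw [hnu]; push_cast; ring
  rw [UmatC6_mul_imat_add_imat_mul_conjTranspose, VmatC6_mul_imat_add_imat_mul_conjTranspose,
    two_mul_formH_diag, ← conformal_factor_eq hc]
  simp only [UmatC6, VmatC6, of_apply, cons_val', cons_val_zero, cons_val_one, empty_val',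
    cons_val_fin_one, Fin.isValue, hH', hlam', hnu']
  exact sub_star_mul_star_sub_of_imaginary _ _ _ _ _

end

theorem statement6_general
    (c : ℝ) (hc : c = -1 ∨ c = 1)
    (I J : Set ℝ)
    (hIopen : IsOpen I)
    (hJopen : IsOpen J)
    (f g : ℝ → ℝ)
    (τ : ℝ)
    (H : ℝ → ℝ → ℂ)
    (hH : ∀ u v, H u v =
      (Complex.I * (τ : ℂ) * (f u : ℂ) + (Complex.I * (τ : ℂ))⁻¹ * (g v : ℂ)) /
        (1 - (c : ℂ) * (f u : ℂ) * (g v : ℂ)))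
    (lam : ℝ → ℂ)
    (hlam : ∀ u, lam u =
      Complex.I * (τ : ℂ) * (1 - (c : ℂ) * (f u : ℂ) ^ 2) /
        (-(τ : ℂ) ^ 2 - (c : ℂ) * (f u : ℂ) ^ 2))
    (nu : ℝ → ℂ)
    (hnu : ∀ v, nu v =
      Complex.I * (τ : ℂ) * (1 - (c : ℂ) * (g v : ℂ) ^ 2) /
        (-(τ : ℂ) ^ 2 - (c : ℂ) * (g v : ℂ) ^ 2))
    (ω Q R : ℝ → ℝ → ℝ)
    (Ψ : ℝ → ℝ → Matrix (Fin 2) (Fin 2) ℂ)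
    (hΨsmooth : ∀ i j, ContDiffOn ℝ (⊤ : ℕ∞) (fun p : ℝ × ℝ => Ψ p.1 p.2 i j) (I ×ˢ J))
    (hΨdet : ∀ u ∈ I, ∀ v ∈ J, (Ψ u v).det = 1)
    (hLaxU : ∀ u ∈ I, ∀ v ∈ J,
      mderiv (fun x => Ψ x v) u = Ψ u v * UmatC6 c ω Q H lam u v)
    (hLaxV : ∀ u ∈ I, ∀ v ∈ J,
      mderiv (fun y => Ψ u y) v = Ψ u v * VmatC6 c ω R H nu u v)
    (F : ℝ → ℝ → Matrix (Fin 2) (Fin 2) ℂ)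
    (hF : ∀ u v, F u v = Ψ u v * imat * (Ψ u v)ᴴ) :
    ∀ u ∈ I, ∀ v ∈ J,
      (F u v).IsHermitian ∧
      (F u v).det = -1 ∧
      formH (mderiv (fun x => F x v) u) (mderiv (fun x => F x v) u) = 0 ∧
      formH (mderiv (fun y => F u y) v) (mderiv (fun y => F u y) v) = 0 ∧
      2 * formH (mderiv (fun x => F x v) u) (mderiv (fun y => F u y) v)
        = ((τ ^ 2 * (1 - c * (f u) ^ 2) * (1 - c * (g v) ^ 2) * Real.exp (ω u v) /
            ((τ ^ 2 + c * (f u) ^ 2) * (τ ^ 2 + c * (g v) ^ 2)) : ℝ) : ℂ) := by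
  intro u hu v hv
  have huv : (u, v) ∈ I ×ˢ J := ⟨hu, hv⟩
  have hΨdiff i j : DifferentiableOn ℝ (fun p : ℝ × ℝ => Ψ p.1 p.2 i j) (I ×ˢ J) :=
    (hΨsmooth i j).differentiableOn (by simp)
  have hFu : mderiv (fun x => F x v) u = Ψ u v *
      (UmatC6 c ω Q H lam u v * imat + imat * (UmatC6 c ω Q H lam u v)ᴴ) * (Ψ u v)ᴴ := by
    simp only [hF]
    exact mderiv_mul_mul_conjTranspose_of_mderiv_eq (fun i j =>
      differentiableAt_fst_slice (hΨdiff i j) (hIopen.prod hJopen) huv) (hLaxU u hu v hv) imat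
  have hFv : mderiv (fun y => F u y) v = Ψ u v *
      (VmatC6 c ω R H nu u v * imat + imat * (VmatC6 c ω R H nu u v)ᴴ) * (Ψ u v)ᴴ := by
    simp only [hF]
    exact mderiv_mul_mul_conjTranspose_of_mderiv_eq (fun i j =>
      differentiableAt_snd_slice (hΨdiff i j) (hIopen.prod hJopen) huv) (hLaxV u hu v hv) imat
  have hdet := hΨdet u hu v hv
  refine ⟨?_, ?_, ?_, ?_, ?_⟩
  · rw [hF, IsHermitian, conjTranspose_mul, conjTranspose_mul, conjTranspose_conjTranspose,
      imat_isHermitian.eq, mul_assoc]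
  · rw [hF, det_mul, det_mul, det_conjTranspose, hdet, det_imat]
    simp
  · rw [hFu, formH_congr, formH_self, UmatC6_mul_imat_add_imat_mul_conjTranspose, det_fin_two_of]
    simp
  · rw [hFv, formH_congr, formH_self, VmatC6_mul_imat_add_imat_mul_conjTranspose, det_fin_two_of]
    simp
  · have hc2 : c ^ 2 = 1 := by rcases hc with rfl | rfl <;> norm_num
    rw [hFu, hFv, formH_congr, hdet, star_one, one_mul, one_mul]
    exact two_mul_formH_laxPair hc2 ω Q R (hH u v) (hlam u) (hnu v)

/-- Theorem 6.10: the immersion formula `F^{(1)}[τ] = p_S(Ψ[√−1 τ])` in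
de Sitter space `S³₁` from the complexified Lax pair with two variable spectral
parameters: `F = Ψi′Ψ*` is Hermitian with `det F = −1`, and is conformal with
`2⟨F_u,F_v⟩ = τ²(1−cf²)(1−cg²)e^ω/((τ²+cf²)(τ²+cg²))`. -/
theorem statement6
    (c : ℝ) (hc : c = -1 ∨ c = 1)
    (I J : Set ℝ)
    (hIopen : IsOpen I) (hIint : I.OrdConnected)
    (hJopen : IsOpen J) (hJint : J.OrdConnected)
    (f g : ℝ → ℝ)
    (hf : ContDiffOn ℝ (⊤ : ℕ∞) f I) (hg : ContDiffOn ℝ (⊤ : ℕ∞) g J)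
    (hfg : ∀ u ∈ I, ∀ v ∈ J, 1 - c * f u * g v ≠ 0)
    (τ : ℝ) (hτ : τ ≠ 0)
    (hτf : ∀ u ∈ I, τ ^ 2 + c * (f u) ^ 2 ≠ 0)
    (hτg : ∀ v ∈ J, τ ^ 2 + c * (g v) ^ 2 ≠ 0)
    (H : ℝ → ℝ → ℂ)
    (hH : ∀ u v, H u v =
      (Complex.I * (τ : ℂ) * (f u : ℂ) + (Complex.I * (τ : ℂ))⁻¹ * (g v : ℂ)) /
        (1 - (c : ℂ) * (f u : ℂ) * (g v : ℂ)))
    (lam : ℝ → ℂ)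
    (hlam : ∀ u, lam u =
      Complex.I * (τ : ℂ) * (1 - (c : ℂ) * (f u : ℂ) ^ 2) /
        (-(τ : ℂ) ^ 2 - (c : ℂ) * (f u : ℂ) ^ 2))
    (nu : ℝ → ℂ)
    (hnu : ∀ v, nu v =
      Complex.I * (τ : ℂ) * (1 - (c : ℂ) * (g v : ℂ) ^ 2) /
        (-(τ : ℂ) ^ 2 - (c : ℂ) * (g v : ℂ) ^ 2))
    (ω Q R : ℝ → ℝ → ℝ)
    (hω : Smooth2 ω (I ×ˢ J)) (hQ : Smooth2 Q (I ×ˢ J)) (hR : Smooth2 R (I ×ˢ J))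
    (Ψ : ℝ → ℝ → Matrix (Fin 2) (Fin 2) ℂ)
    (hΨsmooth : ∀ i j, ContDiffOn ℝ (⊤ : ℕ∞) (fun p : ℝ × ℝ => Ψ p.1 p.2 i j) (I ×ˢ J))
    (hΨdet : ∀ u ∈ I, ∀ v ∈ J, (Ψ u v).det = 1)
    (hLaxU : ∀ u ∈ I, ∀ v ∈ J,
      mderiv (fun x => Ψ x v) u = Ψ u v * UmatC6 c ω Q H lam u v)
    (hLaxV : ∀ u ∈ I, ∀ v ∈ J,
      mderiv (fun y => Ψ u y) v = Ψ u v * VmatC6 c ω R H nu u v)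
    (F : ℝ → ℝ → Matrix (Fin 2) (Fin 2) ℂ)
    (hF : ∀ u v, F u v = Ψ u v * imat * (Ψ u v)ᴴ) :
    ∀ u ∈ I, ∀ v ∈ J,
      (F u v).IsHermitian ∧
      (F u v).det = -1 ∧
      formH (mderiv (fun x => F x v) u) (mderiv (fun x => F x v) u) = 0 ∧
      formH (mderiv (fun y => F u y) v) (mderiv (fun y => F u y) v) = 0 ∧
      2 * formH (mderiv (fun x => F x v) u) (mderiv (fun y => F u y) v)
        = ((τ ^ 2 * (1 - c * (f u) ^ 2) * (1 - c * (g v) ^ 2) * Real.exp (ω u v) /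
            ((τ ^ 2 + c * (f u) ^ 2) * (τ ^ 2 + c * (g v) ^ 2)) : ℝ) : ℂ) :=
  statement6_general c hc I J hIopen hJopen f g τ H hH lam hlam nu hnu ω Q R Ψ hΨsmooth hΨdet hLaxU
    hLaxV F hF
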